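/- Let k be an algebraically closed field, let S̃ = ∏_{i=1}^m Mat(d_i, k) be a semisimple k-algebra with simple factors S̃_i = Mat(d_i, k), and let S be a unital k-subalgebra of S̃ isomorphic to k^r; let e_1, …, e_r ∈ S be the orthogonal idempotents that are the images of the standard basis vectors of k^r (so e_1 + ⋯ + e_r = 1 and S = k e_1 × ⋯ × k e_r, with S_t := k e_t). Assume that dim_k(S̃ e_t) ≤ 2 for all 1 ≤ t ≤ r (this dimension equals the length of S̃ ⊗_S S_t as an S-module). Then for each 1 ≤ t ≤ r one of the following holds: (1) there is an index i with d_i = 1 such that e_t equals the identity element of the factor S̃_i (so S_t = S̃_i); (2) there are indices i ≠ j with d_i = d_j = 1 such that e_t equals the sum of the identity elements of S̃_i and S̃_j (so S_t embeds diagonally into S̃_i × S̃_j ≅ k × k); (3) there are an index q ≠ t and an index i with d_i = 2 such that e_t + e_q equals the identity element of the factor S̃_i, e_t and e_q have zero components in all other factors, and there is an invertible element u of S̃_i = Mat(2, k) with u e_t u^{-1} and u e_q u^{-1} the two diagonal matrix idempotents; i.e., S_t × S_q is conjugate inside S̃_i to the subalgebra of diagonal matrices of Mat(2, k). -/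

import Mathlib

/-!
The left ideal `Ẽ · E` of `E ∈ Ẽ = ∏ᵢ Mat(dᵢ, k)` has dimension `∑ᵢ dᵢ · rank Eᵢ`. Bounding it by
`2` leaves three shapes for a nonzero idempotent `E`: the identity of a `1 × 1` factor, the sum of
the identities of two such factors, or an idempotent `p ≠ 0, 1` in a single `2 × 2` factor. In the
last case `p` is conjugate to `diag(1, 0)`; the other `e_q` are idempotents orthogonal to `p`, so
after conjugation each of them is `0` or `diag(0, 1)`, and as they add up to `1 - p`, one of them
equals `1 - p`.
-/

open Module

namespace LinearMap

variable {R ι : Type*} [Semiring R] {φ ψ : ι → Type*} [∀ i, AddCommMonoid (φ i)]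
  [∀ i, Module R (φ i)] [∀ i, AddCommMonoid (ψ i)] [∀ i, Module R (ψ i)]

theorem range_piMap (f : ∀ i, φ i →ₗ[R] ψ i) :
    range (piMap f) = Submodule.pi Set.univ fun i => range (f i) :=
  Submodule.ext fun _ => ⟨fun ⟨y, hy⟩ i _ => ⟨y i, congr_fun hy i⟩, fun hx => by
    choose y hy using hx
    exact ⟨fun i => y i trivial, funext fun i => hy i trivial⟩⟩

end LinearMap

namespace Submodule

variable {ι : Type*} {φ : ι → Type*}

def piUnivEquiv {R : Type*} [Semiring R] [∀ i, AddCommMonoid (φ i)] [∀ i, Module R (φ i)]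
    (p : ∀ i, Submodule R (φ i)) : pi Set.univ p ≃ₗ[R] ∀ i, p i where
  toFun x i := ⟨x.1 i, x.2 i trivial⟩
  invFun y := ⟨fun i => y i, fun i _ => (y i).2⟩
  map_add' _ _ := rfl
  map_smul' _ _ := rfl
  left_inv _ := rfl
  right_inv _ := rfl

theorem finrank_pi_univ {K : Type*} [Field K] [Fintype ι] [∀ i, AddCommGroup (φ i)]
    [∀ i, Module K (φ i)] [∀ i, FiniteDimensional K (φ i)] (p : ∀ i, Submodule K (φ i)) :
    finrank K (pi Set.univ p) = ∑ i, finrank K (p i) := by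
  rw [(piUnivEquiv p).finrank_eq, finrank_pi_fintype]

end Submodule

variable {K : Type*} [Field K]

theorem LinearMap.finrank_range_mulRight_pi {ι : Type*} [Fintype ι] {A : ι → Type*}
    [∀ i, Ring (A i)] [∀ i, Algebra K (A i)] [∀ i, FiniteDimensional K (A i)] (E : ∀ i, A i) :
    finrank K (range (mulRight K E)) = ∑ i, finrank K (range (mulRight K (E i))) := by
  have : mulRight K E = piMap fun i => mulRight K (E i) := rfl
  rw [this, range_piMap, Submodule.finrank_pi_univ]

namespace Matrix

theorem card_pos_of_ne_zero {m n α : Type*} [Fintype n] [Zero α] {p : Matrix m n α}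
    (hp : p ≠ 0) : 0 < Fintype.card n := by
  obtain ⟨-, j, -⟩ : ∃ i j, p i j ≠ 0 := by
    by_contra! h
    exact hp (ext h)
  exact Fintype.card_pos_iff.2 ⟨j⟩

section Rank

variable {n : Type*} [Fintype n] [DecidableEq n]

theorem finrank_range_mulRight (p : Matrix n n K) :
    finrank K (LinearMap.range (LinearMap.mulRight K p)) = Fintype.card n * p.rank := by
  change finrank K (LinearMap.range (LinearMap.piMap fun _ : n => vecMulLinear p)) = _
  rw [LinearMap.range_piMap, Submodule.finrank_pi_univ, Finset.sum_const, smul_eq_mul,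
    Finset.card_univ, ← transpose_transpose p, vecMulLinear_transpose, rank_transpose]
  rfl

theorem rank_pos_of_ne_zero {m : Type*} {p : Matrix m n K} (hp : p ≠ 0) : 0 < p.rank := by
  rw [rank, Nat.pos_iff_ne_zero, Ne, Submodule.finrank_eq_zero, LinearMap.range_eq_bot]
  exact fun h => hp (toLin'.injective (by rw [map_zero]; exact h))

theorem card_le_finrank_range_mulRight {p : Matrix n n K} (hp : p ≠ 0) :
    Fintype.card n ≤ finrank K (LinearMap.range (LinearMap.mulRight K p)) := by
  rw [finrank_range_mulRight]
  exact Nat.le_mul_of_pos_right _ (rank_pos_of_ne_zero hp)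

end Rank

-- Lemmas about `Fin n` with a hypothesis `n = 1` or `n = 2` (rather than about `Fin 1`, `Fin 2`)
-- apply directly to a factor `Fin (d i)`.
theorem eq_one_of_isIdempotentElem {n : ℕ} (hn : n = 1) {p : Matrix (Fin n) (Fin n) K}
    (hp : IsIdempotentElem p) (h0 : p ≠ 0) : p = 1 := by
  subst hn
  have h00 : p 0 0 ≠ 0 := fun h => h0 (by ext i j; fin_cases i; fin_cases j; exact h)
  have hsq : p 0 0 * p 0 0 = p 0 0 := by simpa [mul_apply] using congr_fun₂ hp.eq 0 0
  have h1 : p 0 0 = 1 := (IsIdempotentElem.iff_eq_zero_or_one.1 hsq).resolve_left h00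
  ext i j
  fin_cases i; fin_cases j
  exact h1

theorem exists_conj_eq_diagonal_of_isIdempotentElem {p : Matrix (Fin 2) (Fin 2) K}
    (hp : IsIdempotentElem p) (h0 : p ≠ 0) (h1 : p ≠ 1) :
    ∃ u : (Matrix (Fin 2) (Fin 2) K)ˣ, ConjAct.toConjAct u • p = diagonal ![1, 0] := by
  obtain ⟨a, ha⟩ : ∃ a, p a ≠ 0 := by
    by_contra! h
    exact h0 (funext h)
  obtain ⟨b, hb⟩ : ∃ b, (1 - p) b ≠ 0 := by
    by_contra! h
    exact h1 (sub_eq_zero.1 (funext h)).symm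
  have hv : p a ᵥ* p = p a := by rw [← mul_apply_eq_vecMul, hp.eq]
  have hw : (1 - p) b ᵥ* p = 0 := by
    rw [← mul_apply_eq_vecMul, sub_mul, one_mul, hp.eq, sub_self]
    rfl
  set A : Matrix (Fin 2) (Fin 2) K := of ![p a, (1 - p) b]
  have hA : IsUnit A := by
    rw [← linearIndependent_rows_iff_isUnit]
    refine LinearIndependent.pair_iff.2 fun s t hst => ?_
    have hs : s • p a = 0 := by
      simpa [add_vecMul, smul_vecMul, hv, hw] using congr_arg (· ᵥ* p) hst
    obtain rfl := (smul_eq_zero.1 hs).resolve_right ha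
    rw [zero_smul, zero_add] at hst
    exact ⟨rfl, (smul_eq_zero.1 hst).resolve_right hb⟩
  refine ⟨hA.unit, ?_⟩
  rw [ConjAct.units_smul_def, ConjAct.ofConjAct_toConjAct, Units.mul_inv_eq_iff_eq_mul,
    IsUnit.unit_spec]
  funext x
  rw [mul_apply_eq_vecMul]
  fin_cases x
  · change p a ᵥ* p = _
    ext y
    simp [hv, diagonal_mul, A]
  · change (1 - p) b ᵥ* p = _
    ext y
    simp [hw, diagonal_mul]

theorem exists_conj_eq_diagonal_pair_of_isIdempotentElem {n : ℕ} (hn : n = 2)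
    {p : Matrix (Fin n) (Fin n) K} (hp : IsIdempotentElem p) (h0 : p ≠ 0) (h1 : p ≠ 1) :
    ∃ u : (Matrix (Fin n) (Fin n) K)ˣ,
      (u : Matrix (Fin n) (Fin n) K) * p * (↑u⁻¹ : Matrix (Fin n) (Fin n) K) =
        diagonal (fun x : Fin n => if (x : ℕ) = 0 then (1 : K) else 0) ∧
      (u : Matrix (Fin n) (Fin n) K) * (1 - p) * (↑u⁻¹ : Matrix (Fin n) (Fin n) K) =
        diagonal (fun x : Fin n => if (x : ℕ) = 1 then (1 : K) else 0) := by
  subst hn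
  obtain ⟨u, hu⟩ := exists_conj_eq_diagonal_of_isIdempotentElem hp h0 h1
  rw [ConjAct.units_smul_def, ConjAct.ofConjAct_toConjAct] at hu
  refine ⟨u, ?_, ?_⟩
  · rw [hu]
    congr 1
    ext x
    fin_cases x <;> rfl
  · rw [mul_sub, sub_mul, mul_one, Units.mul_inv, hu]
    ext x y
    fin_cases x <;> fin_cases y <;> simp

theorem eq_zero_or_eq_diagonal_of_isIdempotentElem {g : Matrix (Fin 2) (Fin 2) K}
    (hg : IsIdempotentElem g) (hl : diagonal ![1, 0] * g = 0) (hr : g * diagonal ![1, 0] = 0) :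
    g = 0 ∨ g = diagonal ![0, 1] := by
  have h0y : ∀ y, g 0 y = 0 := fun y => by simpa [diagonal_mul] using congr_fun₂ hl 0 y
  have hx0 : ∀ x, g x 0 = 0 := fun x => by simpa [mul_diagonal] using congr_fun₂ hr x 0
  have hc : g 1 1 * g 1 1 = g 1 1 := by
    simpa [mul_apply, Fin.sum_univ_two, hx0] using congr_fun₂ hg.eq 1 1
  rcases IsIdempotentElem.iff_eq_zero_or_one.1 hc with hc | hc <;> [left; right] <;>
    ext x y <;> fin_cases x <;> fin_cases y <;> simp [h0y, hx0, hc]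

theorem exists_eq_one_sub_of_add_sum_eq_one {ι : Type*} {n : ℕ} (hn : n = 2)
    {p : Matrix (Fin n) (Fin n) K} (hp : IsIdempotentElem p) (h0 : p ≠ 0) (h1 : p ≠ 1)
    {s : Finset ι} {g : ι → Matrix (Fin n) (Fin n) K} (hg : ∀ q ∈ s, IsIdempotentElem (g q))
    (hpg : ∀ q ∈ s, p * g q = 0) (hgp : ∀ q ∈ s, g q * p = 0)
    (hsum : p + ∑ q ∈ s, g q = 1) :
    ∃ q ∈ s, g q = 1 - p := by
  subst hn
  obtain ⟨u, hcp⟩ := exists_conj_eq_diagonal_of_isIdempotentElem hp h0 h1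
  set c := ConjAct.toConjAct u
  have hcg : ∀ q ∈ s, c • g q = 0 ∨ c • g q = diagonal ![0, 1] := fun q hq =>
    eq_zero_or_eq_diagonal_of_isIdempotentElem ((hg q hq).map (MulSemiringAction.toRingHom _ _ c))
      (by rw [← hcp, ← smul_mul', hpg q hq, smul_zero])
      (by rw [← hcp, ← smul_mul', hgp q hq, smul_zero])
  have hD : diagonal ![0, 1] = c • (1 - p) := by
    rw [smul_sub, smul_one, hcp]
    ext x y
    fin_cases x <;> fin_cases y <;> simp
  by_contra! hne
  have hzero : ∀ q ∈ s, c • g q = 0 := fun q hq =>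
    (hcg q hq).resolve_right fun h => hne q hq ((smul_left_cancel_iff c).1 (h.trans hD))
  have := congr_arg (c • ·) hsum
  simp only [smul_add, Finset.smul_sum, Finset.sum_eq_zero hzero, add_zero, smul_one, hcp] at this
  exact absurd (congr_fun₂ this 1 1) (by simp)

end Matrix

section SmallLeftIdeal

open LinearMap

variable {ι : Type*} [Fintype ι] {d : ι → ℕ}
  {E : ∀ i, Matrix (Fin (d i)) (Fin (d i)) K}

theorem sum_le_finrank_range_mulRight {s : Finset ι} (hs : ∀ i ∈ s, E i ≠ 0) :
    ∑ i ∈ s, d i ≤ finrank K (range (mulRight K E)) := by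
  rw [finrank_range_mulRight_pi]
  calc ∑ i ∈ s, d i ≤ ∑ i ∈ s, finrank K (range (mulRight K (E i))) :=
        Finset.sum_le_sum fun i hi => by
          simpa using (E i).card_le_finrank_range_mulRight (hs i hi)
    _ ≤ _ := Finset.sum_le_sum_of_subset (Finset.subset_univ s)

theorem eq_piSingle_of_finrank_range_mulRight_le_two [DecidableEq ι]
    (hlen : finrank K (range (mulRight K E)) ≤ 2) {i : ι} (hi : E i ≠ 0) (hd : 2 ≤ d i) :
    E = Pi.single i (E i) := by
  funext j
  by_cases hj : j = i
  · subst hj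
    simp
  rw [Pi.single_eq_of_ne hj]
  by_contra hj0
  have := sum_le_finrank_range_mulRight (E := E) (s := {j, i}) (by simp [hj0, hi])
  rw [Finset.sum_pair hj] at this
  have := (E j).card_pos_of_ne_zero hj0
  simp only [Fintype.card_fin] at this
  omega

theorem eq_piSingle_add_piSingle_of_finrank_range_mulRight_le_two [DecidableEq ι]
    (hE : IsIdempotentElem E) (hlen : finrank K (range (mulRight K E)) ≤ 2) {i j : ι}
    (hij : i ≠ j) (hi : E i ≠ 0) (hj : E j ≠ 0) :
    d i = 1 ∧ d j = 1 ∧ E = Pi.single i 1 + Pi.single j 1 := by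
  have hpos : ∀ l, E l ≠ 0 → 0 < d l := fun l hl => by
    simpa using (E l).card_pos_of_ne_zero hl
  have hsum := sum_le_finrank_range_mulRight (E := E) (s := {i, j}) (by simp [hi, hj])
  rw [Finset.sum_pair hij] at hsum
  obtain ⟨hdi, hdj⟩ : d i = 1 ∧ d j = 1 := by
    have := hpos i hi
    have := hpos j hj
    omega
  have hrest : ∀ l, l ≠ i → l ≠ j → E l = 0 := fun l hli hlj => by
    by_contra hl
    have := sum_le_finrank_range_mulRight (E := E) (s := {l, i, j}) (by simp [hl, hi, hj])
    rw [Finset.sum_insert (by simp [hli, hlj]), Finset.sum_pair hij] at this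
    have := hpos l hl
    omega
  refine ⟨hdi, hdj, funext fun l => ?_⟩
  by_cases hli : l = i
  · subst hli
    simp [hij, Matrix.eq_one_of_isIdempotentElem hdi (congr_fun hE.eq l) hi]
  by_cases hlj : l = j
  · subst hlj
    simp [hij.symm, Matrix.eq_one_of_isIdempotentElem hdj (congr_fun hE.eq l) hj]
  simp [hli, hlj, hrest l hli hlj]

theorem trichotomy_of_finrank_range_mulRight_le_two [DecidableEq ι]
    (hE : IsIdempotentElem E) (h0 : E ≠ 0) (hlen : finrank K (range (mulRight K E)) ≤ 2) :
    (∃ i, d i = 1 ∧ E = Pi.single i 1) ∨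
    (∃ i j, i ≠ j ∧ d i = 1 ∧ d j = 1 ∧ E = Pi.single i 1 + Pi.single j 1) ∨
    (∃ i, d i = 2 ∧ E i ≠ 0 ∧ E i ≠ 1 ∧ E = Pi.single i (E i)) := by
  obtain ⟨i, hi⟩ : ∃ i, E i ≠ 0 := by
    by_contra! h
    exact h0 (funext h)
  by_cases hsupp : ∃ j, j ≠ i ∧ E j ≠ 0
  · obtain ⟨j, hji, hj⟩ := hsupp
    exact Or.inr (Or.inl ⟨i, j, hji.symm,
      eq_piSingle_add_piSingle_of_finrank_range_mulRight_le_two hE hlen hji.symm hi hj⟩)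
  have hEi : E = Pi.single i (E i) := funext fun l => by
    by_cases hli : l = i
    · subst hli
      simp
    · simpa [hli] using fun hl => hsupp ⟨l, hli, hl⟩
  have hle := sum_le_finrank_range_mulRight (E := E) (s := {i}) (by simpa)
  have hpos := (E i).card_pos_of_ne_zero hi
  simp only [Finset.sum_singleton, Fintype.card_fin] at hle hpos
  obtain hd | hd : d i = 1 ∨ d i = 2 := by omega
  · rw [Matrix.eq_one_of_isIdempotentElem hd (congr_fun hE.eq i) hi] at hEi
    exact Or.inl ⟨i, hd, hEi⟩
  refine Or.inr (Or.inr ⟨i, hd, hi, fun h1 => ?_, hEi⟩)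
  have := (Finset.single_le_sum (fun _ _ => Nat.zero_le _) (Finset.mem_univ i)).trans
    ((finrank_range_mulRight_pi (K := K) E) ▸ hlen)
  simp [h1, Matrix.finrank_range_mulRight, Matrix.rank_one, hd] at this

end SmallLeftIdeal

theorem semisimple_subalgebra_lemma_general
    (k : Type) [Field k] (m : ℕ) (d : Fin m → ℕ)
    (r : ℕ) (e : Fin r → (∀ i : Fin m, Matrix (Fin (d i)) (Fin (d i)) k))
    (hidem : ∀ t, IsIdempotentElem (e t))
    (horth : ∀ t t', t ≠ t' → e t * e t' = 0)
    (hsum : ∑ t, e t = 1)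
    (hne : ∀ t, e t ≠ 0)
    (hlen : ∀ t, Module.finrank k
      ↥(LinearMap.range (LinearMap.mulRight k (e t))) ≤ 2) :
    ∀ t : Fin r,
      (∃ i : Fin m, d i = 1 ∧ e t = Pi.single i 1) ∨
      (∃ i j : Fin m, i ≠ j ∧ d i = 1 ∧ d j = 1 ∧
        e t = Pi.single i 1 + Pi.single j 1) ∨
      (∃ (q : Fin r) (i : Fin m), q ≠ t ∧ d i = 2 ∧
        e t + e q = Pi.single i 1 ∧
        (∀ i' : Fin m, i' ≠ i → e t i' = 0 ∧ e q i' = 0) ∧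
        ∃ u : (Matrix (Fin (d i)) (Fin (d i)) k)ˣ,
          (u : Matrix (Fin (d i)) (Fin (d i)) k) * e t i * (↑u⁻¹ : Matrix (Fin (d i)) (Fin (d i)) k) =
            Matrix.diagonal (fun x : Fin (d i) => if (x : ℕ) = 0 then (1 : k) else 0) ∧
          (u : Matrix (Fin (d i)) (Fin (d i)) k) * e q i * (↑u⁻¹ : Matrix (Fin (d i)) (Fin (d i)) k) =
            Matrix.diagonal (fun x : Fin (d i) => if (x : ℕ) = 1 then (1 : k) else 0)) := by
  intro t
  rcases trichotomy_of_finrank_range_mulRight_le_two (hidem t) (hne t) (hlen t) with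
    h | h | ⟨i, hd, h0, h1, hts⟩
  · exact Or.inl h
  · exact Or.inr (Or.inl h)
  obtain ⟨q, hq, hqi⟩ := Matrix.exists_eq_one_sub_of_add_sum_eq_one hd (congr_fun (hidem t).eq i)
    h0 h1 (s := Finset.univ.erase t) (g := fun q => e q i)
    (fun q _ => congr_fun (hidem q).eq i)
    (fun q hq => congr_fun (horth t q (Finset.ne_of_mem_erase hq).symm) i)
    (fun q hq => congr_fun (horth q t (Finset.ne_of_mem_erase hq)) i)
    (by rw [Finset.add_sum_erase _ (fun q => e q i) (Finset.mem_univ t), ← Finset.sum_apply, hsum]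
        rfl)
  have hqi0 : e q i ≠ 0 := by
    rw [hqi]
    exact sub_ne_zero.2 (Ne.symm h1)
  have hqs := eq_piSingle_of_finrank_range_mulRight_le_two (hlen q) hqi0 hd.ge
  obtain ⟨u, hut, huq⟩ := Matrix.exists_conj_eq_diagonal_pair_of_isIdempotentElem hd
    (congr_fun (hidem t).eq i) h0 h1
  refine Or.inr (Or.inr ⟨q, i, Finset.ne_of_mem_erase hq, hd, ?_, fun i' hi' => ?_, u, hut, ?_⟩)
  · rw [hts, hqs, ← Pi.single_add, hqi, add_sub_cancel]
  · rw [hts, hqs]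
    simp [Pi.single_eq_of_ne hi']
  · rwa [hqi]

/-- Lemma on semisimple algebras.  Let `St = ∏ i, Mat(d i, k)` be a
semisimple algebra over an algebraically closed field `k` and let `e 1, …, e r` be the
nonzero pairwise orthogonal idempotents summing to `1` giving a subalgebra
`S = k·e 1 × ⋯ × k·e r ≅ k^r`.  If `dim_k (St · e t) ≤ 2` for all `t`, then each `e t`
is: the identity of a `1×1` factor; or the sum of the identities of two distinct `1×1`
factors; or, together with a unique partner `e q`, conjugate inside a single `2×2`
factor to the two diagonal matrix idempotents. -/
theorem semisimple_subalgebra_lemma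
    (k : Type) [Field k] [IsAlgClosed k] (m : ℕ) (d : Fin m → ℕ)
    (r : ℕ) (e : Fin r → (∀ i : Fin m, Matrix (Fin (d i)) (Fin (d i)) k))
    (hidem : ∀ t, IsIdempotentElem (e t))
    (horth : ∀ t t', t ≠ t' → e t * e t' = 0)
    (hsum : ∑ t, e t = 1)
    (hne : ∀ t, e t ≠ 0)
    (hlen : ∀ t, Module.finrank k
      ↥(LinearMap.range (LinearMap.mulRight k (e t))) ≤ 2) :
    ∀ t : Fin r,
      (∃ i : Fin m, d i = 1 ∧ e t = Pi.single i 1) ∨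
      (∃ i j : Fin m, i ≠ j ∧ d i = 1 ∧ d j = 1 ∧
        e t = Pi.single i 1 + Pi.single j 1) ∨
      (∃ (q : Fin r) (i : Fin m), q ≠ t ∧ d i = 2 ∧
        e t + e q = Pi.single i 1 ∧
        (∀ i' : Fin m, i' ≠ i → e t i' = 0 ∧ e q i' = 0) ∧
        ∃ u : (Matrix (Fin (d i)) (Fin (d i)) k)ˣ,
          (u : Matrix (Fin (d i)) (Fin (d i)) k) * e t i * (↑u⁻¹ : Matrix (Fin (d i)) (Fin (d i)) k) =
            Matrix.diagonal (fun x : Fin (d i) => if (x : ℕ) = 0 then (1 : k) else 0) ∧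
          (u : Matrix (Fin (d i)) (Fin (d i)) k) * e q i * (↑u⁻¹ : Matrix (Fin (d i)) (Fin (d i)) k) =
            Matrix.diagonal (fun x : Fin (d i) => if (x : ℕ) = 1 then (1 : k) else 0)) :=
  semisimple_subalgebra_lemma_general k m d r e hidem horth hsum hne hlen
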